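/- If G is a finite simple connected graph on 3 or more vertices, then |E(G)| < h(T(G)). -/

import Mathlib

/-- The primitive hole number of a simple graph: the number of triangles
(3-cliques) in the graph. -/
noncomputable def SimpleGraph.holeNumber {V : Type*} (G : SimpleGraph V) : ℕ :=
  {s : Finset V | G.IsNClique 3 s}.ncard

/-- The primitive degree of a vertex: the number of triangles (3-cliques)
of the graph containing that vertex. -/
noncomputable def SimpleGraph.primDegree {V : Type*} (G : SimpleGraph V) (v : V) : ℕ :=
  {s : Finset V | G.IsNClique 3 s ∧ v ∈ s}.ncard

/-- The total graph of a simple graph `G`: vertices are the vertices and edges of `G`,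
two of them adjacent iff the corresponding elements of `G` are adjacent or incident. -/
def SimpleGraph.totalGraph {V : Type*} (G : SimpleGraph V) :
    SimpleGraph (V ⊕ G.edgeSet) where
  Adj x y :=
    match x, y with
    | Sum.inl u, Sum.inl v => G.Adj u v
    | Sum.inl u, Sum.inr e => u ∈ (e : Sym2 V)
    | Sum.inr e, Sum.inl u => u ∈ (e : Sym2 V)
    | Sum.inr e, Sum.inr f => e ≠ f ∧ ∃ v, v ∈ (e : Sym2 V) ∧ v ∈ (f : Sym2 V)
  symm := by
    refine ⟨?_⟩
    rintro (u | e) (v | f) h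
    · exact G.adj_symm h
    · exact h
    · exact h
    · exact ⟨h.1.symm, h.2.imp fun v hv => ⟨hv.2, hv.1⟩⟩
  loopless := by
    refine ⟨?_⟩
    rintro (u | e) h
    · exact G.irrefl h
    · exact h.1 rfl


/-!
Every edge `e = uv` of `G` spans the triangle `{u, v, e}` of `T(G)`, and distinct edges give
distinct triangles, so `T(G)` has at least `|E(G)|` triangles. A connected graph on at least three
vertices contains a path `x y z`; then `{xy, yz, y}` is one more triangle of `T(G)`, containing two
edge-vertices and hence not of the form `{u, v, e}`.
-/

namespace SimpleGraph

variable {V : Type*} {G : SimpleGraph V}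

theorem Connected.exists_adj_adj_ne (hG : G.Connected) {a b c : V} (hab : a ≠ b) (hac : a ≠ c)
    (hbc : b ≠ c) : ∃ x y z, G.Adj x y ∧ G.Adj y z ∧ x ≠ z := by
  have : Nontrivial V := ⟨⟨a, b, hab⟩⟩
  obtain ⟨a', ha'⟩ := hG.preconnected.exists_adj_of_nontrivial a
  obtain ⟨w, hwa, hwa'⟩ : ∃ w, w ≠ a ∧ w ≠ a' := by
    by_cases hb : b = a'
    · exact ⟨c, hac.symm, hb ▸ hbc.symm⟩
    · exact ⟨b, hab.symm, hb⟩
  obtain ⟨p⟩ := hG.preconnected w a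
  obtain ⟨d, -, hd_fst, hd_snd⟩ :=
    p.exists_boundary_dart {v | v ≠ a ∧ v ≠ a'} ⟨hwa, hwa'⟩ (by simp)
  simp only [Set.mem_ofPred_eq, not_and_or, not_not] at hd_fst hd_snd
  rcases hd_snd with h | h
  · exact ⟨d.fst, a, a', h ▸ d.adj, ha', hd_fst.2⟩
  · exact ⟨d.fst, a', a, h ▸ d.adj, ha'.symm, hd_fst.1⟩

theorem mk_ne_mk_of_adj_adj {x y z : V} (hxy : G.Adj x y) (hyz : G.Adj y z) (hxz : x ≠ z) :
    (⟨s(x, y), hxy⟩ : G.edgeSet) ≠ ⟨s(y, z), hyz⟩ := by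
  intro h
  rcases Sym2.eq_iff.mp (congrArg Subtype.val h) with ⟨hxy_eq, -⟩ | ⟨hxz_eq, -⟩
  exacts [hxy.ne hxy_eq, hxz hxz_eq]

variable [DecidableEq V]

def edgeTriangle (G : SimpleGraph V) (e : G.edgeSet) : Finset (V ⊕ G.edgeSet) :=
  Sym2.lift ⟨fun u v => {.inl u, .inl v, .inr e}, fun u v => by simp [Finset.insert_comm]⟩ e

theorem edgeTriangle_mk {u v : V} (h : G.Adj u v) :
    G.edgeTriangle ⟨s(u, v), h⟩ = {.inl u, .inl v, .inr ⟨s(u, v), h⟩} :=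
  rfl

theorem inr_mem_edgeTriangle_iff {e f : G.edgeSet} : .inr f ∈ G.edgeTriangle e ↔ f = e := by
  obtain ⟨e, he⟩ := e
  induction e using Sym2.ind with
  | _ u v => simp [edgeTriangle_mk he]

theorem edgeTriangle_injective : Function.Injective G.edgeTriangle := fun e f h =>
  (inr_mem_edgeTriangle_iff.mp (h ▸ inr_mem_edgeTriangle_iff.mpr rfl)).symm

theorem totalGraph_isNClique_edgeTriangle (e : G.edgeSet) :
    G.totalGraph.IsNClique 3 (G.edgeTriangle e) := by
  obtain ⟨e, he⟩ := e
  induction e using Sym2.ind with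
  | _ u v =>
    rw [edgeTriangle_mk he, is3Clique_triple_iff]
    exact ⟨he, Sym2.mem_mk_left u v, Sym2.mem_mk_right u v⟩

theorem totalGraph_isNClique_adj_adj {x y z : V} (hxy : G.Adj x y) (hyz : G.Adj y z)
    (hxz : x ≠ z) :
    G.totalGraph.IsNClique 3
      ({.inr ⟨s(x, y), hxy⟩, .inr ⟨s(y, z), hyz⟩, .inl y} : Finset (V ⊕ G.edgeSet)) := by
  rw [is3Clique_triple_iff]
  exact ⟨⟨mk_ne_mk_of_adj_adj hxy hyz hxz, y, Sym2.mem_mk_right x y, Sym2.mem_mk_left y z⟩,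
    Sym2.mem_mk_right x y, Sym2.mem_mk_left y z⟩

theorem inr_inr_inl_notMem_range_edgeTriangle {x y z : V} (hxy : G.Adj x y) (hyz : G.Adj y z)
    (hxz : x ≠ z) :
    ({.inr ⟨s(x, y), hxy⟩, .inr ⟨s(y, z), hyz⟩, .inl y} : Finset (V ⊕ G.edgeSet)) ∉
      Set.range G.edgeTriangle := by
  rintro ⟨e, he⟩
  have hxy_eq : (⟨s(x, y), hxy⟩ : G.edgeSet) = e := inr_mem_edgeTriangle_iff.mp (by simp [he])
  have hyz_eq : (⟨s(y, z), hyz⟩ : G.edgeSet) = e := inr_mem_edgeTriangle_iff.mp (by simp [he])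
  exact mk_ne_mk_of_adj_adj hxy hyz hxz (hxy_eq.trans hyz_eq.symm)

end SimpleGraph

/-- If `G` is a finite simple connected graph on at least `3` vertices, then
`|E(G)| < h(T(G))`. -/
theorem card_edgeSet_lt_holeNumber_totalGraph {V : Type*} [Fintype V]
    (G : SimpleGraph V) (hconn : G.Connected) (hcard : 3 ≤ Fintype.card V) :
    G.edgeSet.ncard < G.totalGraph.holeNumber := by
  classical
  obtain ⟨a, b, c, hab, hac, hbc⟩ := Fintype.two_lt_card_iff.mp hcard
  obtain ⟨x, y, z, hxy, hyz, hxz⟩ := hconn.exists_adj_adj_ne hab hac hbc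
  have hrange : Set.range G.edgeTriangle ⊆ {s | G.totalGraph.IsNClique 3 s} :=
    Set.range_subset_iff.mpr SimpleGraph.totalGraph_isNClique_edgeTriangle
  calc G.edgeSet.ncard = (Set.range G.edgeTriangle).ncard :=
        (Set.ncard_range_of_injective SimpleGraph.edgeTriangle_injective).symm
    _ < G.totalGraph.holeNumber :=
        Set.ncard_lt_ncard ⟨hrange, fun h =>
          SimpleGraph.inr_inr_inl_notMem_range_edgeTriangle hxy hyz hxz
            (h (SimpleGraph.totalGraph_isNClique_adj_adj hxy hyz hxz))⟩
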